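/- For a BCN with unsafe set X_u and safe set X_s = L_N \ X_u, the safe control problem is solvable if and only if (i) every x ∈ X_s has a successor in X_s (∃u with L ⋉ u ⋉ x ∈ X_s), and (ii) X_s is reachable from every x ∈ X_u. Moreover, if solvable, it is solvable by a state feedback law u(t) = K x(t) with K ∈ L_{M×N}. -/
import Mathlib


def traj {N M : ℕ} (f : Fin M → Fin N → Fin N) (u : ℕ → Fin M) (x0 : Fin N) : ℕ → Fin N
  | 0 => x0
  | t + 1 => f (u t) (traj f u x0 t)

/-- The safe control problem is solvable: there is an input strategy (an input
sequence for each initial state) such that every trajectory starting in the safe set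
`Xuᶜ` remains in it forever, and every trajectory starting in `Xu` enters the safe set
in finitely many steps and there remains. -/
def SafeSolvable {N M : ℕ} (f : Fin M → Fin N → Fin N) (Xu : Set (Fin N)) : Prop :=
  ∃ u : Fin N → ℕ → Fin M, ∀ x0 : Fin N,
    (x0 ∈ Xuᶜ → ∀ t, traj f (u x0) x0 t ∈ Xuᶜ) ∧
    (x0 ∈ Xu → ∃ t0, ∀ t, t0 ≤ t → traj f (u x0) x0 t ∈ Xuᶜ)

lemma traj_shift {N M : ℕ} (f : Fin M → Fin N → Fin N) (u : ℕ → Fin M) (x : Fin N) :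
    ∀ t, traj f (fun n => u (n + 1)) (f (u 0) x) t = traj f u x (t + 1)
  | 0 => rfl
  | t + 1 => by
      show f (u (t + 1)) (traj f (fun n => u (n + 1)) (f (u 0) x) t) = _
      rw [traj_shift f u x t]; rfl

lemma cond_to_K {N M : ℕ} (f : Fin M → Fin N → Fin N) (Xu : Set (Fin N))
    (h1 : ∀ x ∈ Xuᶜ, ∃ v : Fin M, f v x ∈ Xuᶜ)
    (h2 : ∀ x ∈ Xu, ∃ τ, ∃ u : ℕ → Fin M, traj f u x τ ∈ Xuᶜ) :
    ∃ K : Fin N → Fin M, ∀ x0 : Fin N,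
      (x0 ∈ Xuᶜ → ∀ t, (fun x => f (K x) x)^[t] x0 ∈ Xuᶜ) ∧
      (x0 ∈ Xu → ∃ t0, ∀ t, t0 ≤ t → (fun x => f (K x) x)^[t] x0 ∈ Xuᶜ) := by
  classical
  rcases isEmpty_or_nonempty (Fin N) with hN | hN
  · exact ⟨fun x => isEmptyElim x, fun x => isEmptyElim x⟩
  have hM : Nonempty (Fin M) := by
    obtain ⟨x⟩ := hN
    by_cases hx : x ∈ Xu
    · obtain ⟨τ, u, -⟩ := h2 x hx
      exact ⟨u 0⟩
    · obtain ⟨v, -⟩ := h1 x hx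
      exact ⟨v⟩
  have hP : ∀ x : Fin N, ∃ τ, ∃ u : ℕ → Fin M, traj f u x τ ∈ Xuᶜ := by
    intro x
    by_cases hx : x ∈ Xu
    · exact h2 x hx
    · exact ⟨0, fun _ => Classical.arbitrary _, hx⟩
  set d : Fin N → ℕ := fun x => Nat.find (hP x) with hd
  set K : Fin N → Fin M := fun x =>
    if hx : x ∈ Xuᶜ then Classical.choose (h1 x hx)
    else (Classical.choose (Nat.find_spec (hP x))) 0 with hK
  have hsafe : ∀ x (hx : x ∈ Xuᶜ), f (K x) x ∈ Xuᶜ := by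
    intro x hx
    have : K x = Classical.choose (h1 x hx) := dif_pos hx
    rw [this]
    exact Classical.choose_spec (h1 x hx)
  have hsafe_forever : ∀ x ∈ Xuᶜ, ∀ t, (fun x => f (K x) x)^[t] x ∈ Xuᶜ := by
    intro x hx t
    induction t with
    | zero => exact hx
    | succ t ih =>
        rw [Function.iterate_succ_apply']
        exact hsafe _ ih
  have hdpos : ∀ x, x ∉ Xuᶜ → 0 < d x := by
    intro x hx
    rcases Nat.eq_zero_or_pos (d x) with h0 | h0
    · exfalso
      have hspec := Nat.find_spec (hP x)
      rw [show Nat.find (hP x) = 0 from h0] at hspec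
      obtain ⟨u, hu⟩ := hspec
      exact hx hu
    · exact h0
  have hstep : ∀ x, x ∉ Xuᶜ → d (f (K x) x) < d x := by
    intro x hx
    have hu : traj f (Classical.choose (Nat.find_spec (hP x))) x (d x) ∈ Xuᶜ :=
      Classical.choose_spec (Nat.find_spec (hP x))
    set u := Classical.choose (Nat.find_spec (hP x)) with hu'
    have hKx : K x = u 0 := dif_neg hx
    have hpos := hdpos x hx
    have hdx : d x - 1 + 1 = d x := Nat.succ_pred_eq_of_pos hpos
    have : traj f (fun n => u (n + 1)) (f (u 0) x) (d x - 1) ∈ Xuᶜ := by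
      rw [traj_shift, hdx]; exact hu
    have hle : d (f (u 0) x) ≤ d x - 1 :=
      Nat.find_le ⟨fun n => u (n + 1), this⟩
    rw [hKx]
    omega
  have main : ∀ n, ∀ x : Fin N, d x ≤ n → ∀ t, n ≤ t →
      (fun x => f (K x) x)^[t] x ∈ Xuᶜ := by
    intro n
    induction n with
    | zero =>
        intro x hx t ht
        have h0 : d x = 0 := Nat.le_zero.mp hx
        have hspec := Nat.find_spec (hP x)
        rw [show Nat.find (hP x) = 0 from h0] at hspec
        obtain ⟨u, hu⟩ := hspec
        exact hsafe_forever x hu t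
    | succ n ih =>
        intro x hx t ht
        by_cases hxs : x ∈ Xuᶜ
        · exact hsafe_forever x hxs t
        · have h1' : d (f (K x) x) ≤ n := by
            have := hstep x hxs
            omega
          have ht1 : t - 1 + 1 = t := by omega
          have : (fun x => f (K x) x)^[t] x
              = (fun x => f (K x) x)^[t - 1] (f (K x) x) := by
            conv_lhs => rw [← ht1]
            rw [Function.iterate_succ_apply]
          rw [this]
          exact ih (f (K x) x) h1' (t - 1) (by omega)
  refine ⟨K, fun x0 => ⟨hsafe_forever x0, fun hx => ⟨d x0, fun t ht => ?_⟩⟩⟩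
  exact main (d x0) x0 le_rfl t ht

lemma solv_of_K {N M : ℕ} (f : Fin M → Fin N → Fin N) (Xu : Set (Fin N))
    (h : ∃ K : Fin N → Fin M, ∀ x0 : Fin N,
      (x0 ∈ Xuᶜ → ∀ t, (fun x => f (K x) x)^[t] x0 ∈ Xuᶜ) ∧
      (x0 ∈ Xu → ∃ t0, ∀ t, t0 ≤ t → (fun x => f (K x) x)^[t] x0 ∈ Xuᶜ)) :
    SafeSolvable f Xu := by
  obtain ⟨K, hK⟩ := h
  refine ⟨fun x0 t => K ((fun x => f (K x) x)^[t] x0), fun x0 => ?_⟩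
  have htr : ∀ t, traj f (fun t => K ((fun x => f (K x) x)^[t] x0)) x0 t
      = (fun x => f (K x) x)^[t] x0 := by
    intro t
    induction t with
    | zero => rfl
    | succ t ih =>
        show f _ (traj f _ x0 t) = _
        rw [ih, Function.iterate_succ_apply']
  constructor
  · intro hx t
    rw [htr]
    exact (hK x0).1 hx t
  · intro hx
    obtain ⟨t0, h⟩ := (hK x0).2 hx
    exact ⟨t0, fun t ht => by rw [htr]; exact h t ht⟩

lemma solv_to_cond {N M : ℕ} (f : Fin M → Fin N → Fin N) (Xu : Set (Fin N)) :
    SafeSolvable f Xu →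
      ((∀ x ∈ Xuᶜ, ∃ v : Fin M, f v x ∈ Xuᶜ) ∧
        (∀ x ∈ Xu, ∃ τ, ∃ u : ℕ → Fin M, traj f u x τ ∈ Xuᶜ)) := by
  rintro ⟨u, hu⟩
  constructor
  · intro x hx
    exact ⟨u x 0, (hu x).1 hx 1⟩
  · intro x hx
    obtain ⟨t0, ht⟩ := (hu x).2 hx
    exact ⟨t0, u x, ht t0 le_rfl⟩

/-- Safe control is solvable iff (i) every safe state has a successor in the safe set,
and (ii) the safe set is reachable from every unsafe state; moreover, if solvable, it
is solvable by a state feedback law `u(t) = K x(t)`. -/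
theorem stmt17 {N M : ℕ} (f : Fin M → Fin N → Fin N) (Xu : Set (Fin N)) :
    (SafeSolvable f Xu ↔
      ((∀ x ∈ Xuᶜ, ∃ v : Fin M, f v x ∈ Xuᶜ) ∧
        (∀ x ∈ Xu, ∃ τ, ∃ u : ℕ → Fin M, traj f u x τ ∈ Xuᶜ)))
    ∧ (SafeSolvable f Xu →
        ∃ K : Fin N → Fin M, ∀ x0 : Fin N,
          (x0 ∈ Xuᶜ → ∀ t, (fun x => f (K x) x)^[t] x0 ∈ Xuᶜ) ∧
          (x0 ∈ Xu → ∃ t0, ∀ t, t0 ≤ t → (fun x => f (K x) x)^[t] x0 ∈ Xuᶜ)) := by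
  constructor
  · constructor
    · exact solv_to_cond f Xu
    · rintro ⟨h1, h2⟩
      exact solv_of_K f Xu (cond_to_K f Xu h1 h2)
  · intro h
    obtain ⟨h1, h2⟩ := solv_to_cond f Xu h
    exact cond_to_K f Xu h1 h2
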